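/- If 𝒞 is an optimal set-join cover of a graph G, then the graph G(𝒞) of the cover is twin-free: no two distinct vertices of G(𝒞) have the same neighbourhood in G(𝒞). -/

import Mathlib

open Matrix

/-- A finite simple undirected graph that allows loops: a symmetric adjacency
relation on the vertex type. -/
structure LGraph (V : Type*) where
  /-- the adjacency relation; `Adj v v` means a loop at `v`. -/
  Adj : V → V → Prop
  /-- adjacency is symmetric -/
  symm : ∀ {u v : V}, Adj u v → Adj v u

namespace LGraph

variable {V W : Type*}

/-- `𝒞` is a set-join cover of `G`: all components are nonempty subsets of the
vertex set, and the union of the edge sets of the set-joins `K ∨ L` in `𝒞` is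
exactly the edge set of `G`. A set-join is represented as an unordered pair
`s(K, L)` of subsets of the vertex set. -/
def IsSetJoinCover (G : LGraph V) (𝒞 : Set (Sym2 (Set V))) : Prop :=
  (∀ p ∈ 𝒞, ∀ K ∈ p, (K : Set V).Nonempty) ∧
    ∀ u v : V, G.Adj u v ↔ ∃ p ∈ 𝒞, ∃ K L : Set V, p = s(K, L) ∧ u ∈ K ∧ v ∈ L

/-- The component set `V(𝒞)` of a set-join cover: all subsets of the vertex set
appearing as a component of some set-join in `𝒞`. -/
def comps (𝒞 : Set (Sym2 (Set V))) : Set (Set V) :=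
  {K : Set V | ∃ p ∈ 𝒞, K ∈ p}

/-- The order `|𝒞|` of a set-join cover: the number of its components. -/
noncomputable def coverOrder (𝒞 : Set (Sym2 (Set V))) : ℕ :=
  (comps 𝒞).ncard

/-- The SNT-rank `st₊(G)` of a graph: the minimal order of a set-join cover of `G`. -/
noncomputable def st (G : LGraph V) : ℕ :=
  sInf {k : ℕ | ∃ 𝒞 : Set (Sym2 (Set V)), G.IsSetJoinCover 𝒞 ∧ coverOrder 𝒞 = k}

/-- An optimal set-join cover (OSJ cover): a set-join cover of order `st₊(G)`. -/
def IsOptimalCover (G : LGraph V) (𝒞 : Set (Sym2 (Set V))) : Prop :=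
  G.IsSetJoinCover 𝒞 ∧ coverOrder 𝒞 = G.st

/-- The graph `G(𝒞)` of a set-join cover: vertices are the components, and two
components `K`, `L` are adjacent iff the set-join `K ∨ L` belongs to `𝒞`. -/
def coverGraph (𝒞 : Set (Sym2 (Set V))) : LGraph (comps 𝒞) where
  Adj K L := s((K : Set V), (L : Set V)) ∈ 𝒞
  symm := by
    intro K L h
    rwa [Sym2.eq_swap] at h

/-- The neighbourhood of a vertex (`v ∈ neighborSet v` iff `v` has a loop). -/
def neighborSet (G : LGraph V) (v : V) : Set V := {w | G.Adj v w}

/-- The induced subgraph on a set of vertices. -/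
def induce (G : LGraph V) (S : Set V) : LGraph S where
  Adj a b := G.Adj (a : V) (b : V)
  symm := by intro a b h; exact G.symm h

/-- Adjacency for the disjoint union of two graphs. -/
def disjUnionAdj (G : LGraph V) (H : LGraph W) : V ⊕ W → V ⊕ W → Prop
  | Sum.inl a, Sum.inl b => G.Adj a b
  | Sum.inr a, Sum.inr b => H.Adj a b
  | _, _ => False

/-- The disjoint union `G ∪ H` of two graphs. -/
def disjUnion (G : LGraph V) (H : LGraph W) : LGraph (V ⊕ W) where
  Adj := disjUnionAdj G H
  symm := by
    rintro (a | a) (b | b) h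
    · exact G.symm h
    · exact h.elim
    · exact h.elim
    · exact H.symm h

/-- The graph with no edges on vertex type `V`. -/
def emptyGraph (V : Type*) : LGraph V where
  Adj _ _ := False
  symm := by intro u v h; exact h

/-- Adjacency for the join of a graph with a single looped vertex `none`. -/
def joinK1ℓAdj (G : LGraph V) : Option V → Option V → Prop
  | some a, some b => G.Adj a b
  | _, _ => True

/-- The join `G ∨ K₁ˡ` of `G` with a single looped vertex (the vertex `none`). -/
def joinK1ℓ (G : LGraph V) : LGraph (Option V) where
  Adj := joinK1ℓAdj G
  symm := by
    rintro (_ | a) (_ | b) h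
    · trivial
    · trivial
    · trivial
    · exact G.symm h

/-- The complete loopless graph `Kₙ` on `Fin n`. -/
def completeGraph (n : ℕ) : LGraph (Fin n) where
  Adj i j := i ≠ j
  symm := by intro i j h; exact h.symm

/-- The path `Pₙ` on `n` vertices (no loops). -/
def pathGraph (n : ℕ) : LGraph (Fin n) where
  Adj i j := (i : ℕ) + 1 = (j : ℕ) ∨ (j : ℕ) + 1 = (i : ℕ)
  symm := by intro i j h; exact h.symm

/-- The cycle `Cₙ` on `n` vertices (no loops), for `n ≥ 3`. -/
def cycleGraph (n : ℕ) : LGraph (Fin n) where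
  Adj i j := ((i : ℕ) + 1) % n = (j : ℕ) ∨ ((j : ℕ) + 1) % n = (i : ℕ)
  symm := by intro i j h; exact h.symm

/-- Adjacency for the generalised star: the centre is `none`, and `some ⟨i, j⟩`
is the vertex at distance `j + 1` from the centre on arm `i`. -/
def genStarAdj (t : ℕ) (k : Fin t → ℕ) :
    Option ((i : Fin t) × Fin (k i)) → Option ((i : Fin t) × Fin (k i)) → Prop
  | none, none => False
  | none, some ⟨_, j⟩ => (j : ℕ) = 0
  | some ⟨_, j⟩, none => (j : ℕ) = 0
  | some ⟨i, j⟩, some ⟨i', j'⟩ => i = i' ∧ ((j : ℕ) + 1 = (j' : ℕ) ∨ (j' : ℕ) + 1 = (j : ℕ))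

/-- The generalised star `star(k₁, …, k_t)` with central vertex `none` and `t`
arms, the `i`-th arm being a path with `k i` edges emanating from the centre. -/
def genStar (t : ℕ) (k : Fin t → ℕ) : LGraph (Option ((i : Fin t) × Fin (k i))) where
  Adj := genStarAdj t k
  symm := by
    rintro (_ | ⟨i, j⟩) (_ | ⟨i', j'⟩) h
    · exact h.elim
    · exact h
    · exact h
    · exact ⟨h.1.symm, h.2.symm⟩

/-- A loopless leaf: a vertex with exactly one neighbour and no loop. -/
def LooplessLeaf (G : LGraph V) (v : V) : Prop :=
  ¬ G.Adj v v ∧ ∃ w : V, G.neighborSet v = {w}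

/-- Delete from `G` all edges incident to the vertex `w`. -/
def deleteVertexEdges (G : LGraph V) (w : V) : LGraph V where
  Adj u v := G.Adj u v ∧ u ≠ w ∧ v ≠ w
  symm := by intro u v h; exact ⟨G.symm h.1, h.2.2, h.2.1⟩

/-- A graph is twin-free if no two distinct vertices have the same neighbourhood. -/
def TwinFree (G : LGraph V) : Prop :=
  ∀ u v : V, G.neighborSet u = G.neighborSet v → u = v

/-- `G` has a unique optimal set-join cover. -/
def HasUniqueOptimalCover (G : LGraph V) : Prop :=
  ∃! 𝒞 : Set (Sym2 (Set V)), G.IsSetJoinCover 𝒞 ∧ coverOrder 𝒞 = G.st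

/-- The cover graphs of two set-join covers are isomorphic. -/
def CoverGraphIso (𝒞 : Set (Sym2 (Set V))) (𝒟 : Set (Sym2 (Set W))) : Prop :=
  ∃ e : comps 𝒞 ≃ comps 𝒟,
    ∀ K L : comps 𝒞, (coverGraph 𝒞).Adj K L ↔ (coverGraph 𝒟).Adj (e K) (e L)

/-- All optimal set-join covers of `G` have isomorphic cover graphs. -/
def HasUniqueOSJCoverGraph (G : LGraph V) : Prop :=
  ∀ 𝒞 𝒟 : Set (Sym2 (Set V)),
    G.IsOptimalCover 𝒞 → G.IsOptimalCover 𝒟 → CoverGraphIso 𝒞 𝒟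

/-- Entrywise nonnegativity of a real matrix. -/
def EntrywiseNonneg {m n : Type*} (A : Matrix m n ℝ) : Prop :=
  ∀ i j, 0 ≤ A i j

/-- The SNT-rank `st₊(A)` of a matrix: the minimal `k` such that `A = B * C * Bᵀ`
with `B` an entrywise nonnegative `n × k` matrix and `C` a symmetric entrywise
nonnegative `k × k` matrix. -/
noncomputable def stM {V : Type*} [Fintype V] (A : Matrix V V ℝ) : ℕ :=
  sInf {k : ℕ | ∃ B : Matrix V (Fin k) ℝ, ∃ C : Matrix (Fin k) (Fin k) ℝ,
    EntrywiseNonneg B ∧ C.IsSymm ∧ EntrywiseNonneg C ∧ A = B * C * Bᵀ}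

/-- The SNT-rank `st₊(G)` of a graph defined via matrices: the minimum of
`st₊(A)` over all symmetric entrywise nonnegative matrices `A` whose pattern
graph is `G`. -/
noncomputable def stMGraph {V : Type*} [Fintype V] (G : LGraph V) : ℕ :=
  sInf {k : ℕ | ∃ A : Matrix V V ℝ, A.IsSymm ∧ EntrywiseNonneg A ∧
    (∀ i j, G.Adj i j ↔ 0 < A i j) ∧ stM A = k}

/-- The loopy graph associated with a simple graph. -/
def _root_.SimpleGraph.toLGraph (G : SimpleGraph V) : LGraph V where
  Adj := G.Adj
  symm := by intro u v h; exact G.adj_symm h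

/-- The edge star cover number `starc(G)` of a loopless simple graph: the minimal
number of stars (given by a centre and a nonempty set of leaves not containing
the centre) whose edge sets have union exactly `E(G)`. -/
noncomputable def starCoverNumber (G : SimpleGraph V) : ℕ :=
  sInf {k : ℕ | ∃ f : Fin k → V × Set V,
    (∀ i, (f i).2.Nonempty ∧ (f i).1 ∉ (f i).2) ∧
    ∀ u v : V, G.Adj u v ↔
      ∃ i, (u = (f i).1 ∧ v ∈ (f i).2) ∨ (v = (f i).1 ∧ u ∈ (f i).2)}


/-
If two distinct components `K ≠ L` of a cover have the same neighbourhood in `G(𝒞)`, replace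
both by `K ∪ L` everywhere. Every edge of a merged join `(K ∪ L) ∨ M` already lies in `K ∨ M` or
`L ∨ M`, and both of these are in `𝒞` because `K` and `L` are twins; so the result is still a
set-join cover of `G`, with one component fewer, contradicting optimality.
-/

theorem comps_image_map (f : Set V → Set V) (𝒞 : Set (Sym2 (Set V))) :
    comps (Sym2.map f '' 𝒞) = f '' comps 𝒞 := by
  ext M
  constructor
  · rintro ⟨_, ⟨p, hp, rfl⟩, hM⟩
    obtain ⟨A, hA, rfl⟩ := Sym2.mem_map.1 hM
    exact ⟨A, ⟨p, hp, hA⟩, rfl⟩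
  · rintro ⟨A, ⟨p, hp, hA⟩, rfl⟩
    exact ⟨_, ⟨p, hp, rfl⟩, Sym2.mem_map.2 ⟨A, hA, rfl⟩⟩

theorem st_le_coverOrder {G : LGraph V} {𝒞 : Set (Sym2 (Set V))} (h𝒞 : G.IsSetJoinCover 𝒞) :
    G.st ≤ coverOrder 𝒞 :=
  Nat.sInf_le ⟨𝒞, h𝒞, rfl⟩

theorem IsSetJoinCover.image_map {G : LGraph V} {𝒞 : Set (Sym2 (Set V))}
    (h𝒞 : G.IsSetJoinCover 𝒞) (f : Set V → Set V) (hf : ∀ M, M ⊆ f M)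
    (hcov : ∀ A B, s(A, B) ∈ 𝒞 → ∀ u ∈ f A, ∃ A', u ∈ A' ∧ s(A', B) ∈ 𝒞) :
    G.IsSetJoinCover (Sym2.map f '' 𝒞) := by
  obtain ⟨hne, hadj⟩ := h𝒞
  have hmapped : ∀ A B, s(A, B) ∈ 𝒞 → ∀ u ∈ f A, ∀ v ∈ f B, G.Adj u v := by
    intro A B hAB u hu v hv
    obtain ⟨A', hu', hA'B⟩ := hcov A B hAB u hu
    obtain ⟨B', hv', hB'A'⟩ := hcov B A' (Sym2.eq_swap ▸ hA'B) v hv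
    exact (hadj u v).2 ⟨_, Sym2.eq_swap ▸ hB'A', A', B', rfl, hu', hv'⟩
  refine ⟨?_, fun u v => ⟨fun huv => ?_, ?_⟩⟩
  · rintro _ ⟨p, hp, rfl⟩ M hM
    obtain ⟨A, hA, rfl⟩ := Sym2.mem_map.1 hM
    exact (hne p hp A hA).mono (hf A)
  · obtain ⟨p, hp, A, B, rfl, hu, hv⟩ := (hadj u v).1 huv
    exact ⟨_, ⟨_, hp, rfl⟩, f A, f B, Sym2.map_mk f A B, hf A hu, hf B hv⟩
  · rintro ⟨_, ⟨p, hp, rfl⟩, A', B', hp', hu, hv⟩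
    induction p using Sym2.inductionOn with
    | hf A B =>
      rcases Sym2.eq_iff.1 (Sym2.map_mk f A B ▸ hp') with ⟨rfl, rfl⟩ | ⟨rfl, rfl⟩
      · exact hmapped A B hp u hu v hv
      · exact hmapped B A (Sym2.eq_swap ▸ hp) u hu v hv

theorem mem_iff_of_neighborSet_coverGraph_eq {𝒞 : Set (Sym2 (Set V))} {K L : comps 𝒞}
    (hKL : (coverGraph 𝒞).neighborSet K = (coverGraph 𝒞).neighborSet L) (M : Set V) :
    s((K : Set V), M) ∈ 𝒞 ↔ s((L : Set V), M) ∈ 𝒞 :=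
  ⟨fun h => (Set.ext_iff.1 hKL ⟨M, _, h, Sym2.mem_mk_right _ _⟩).1 h,
    fun h => (Set.ext_iff.1 hKL ⟨M, _, h, Sym2.mem_mk_right _ _⟩).2 h⟩

open Classical in
noncomputable def mergeComps (K L : Set V) (M : Set V) : Set V :=
  if M = K ∨ M = L then K ∪ L else M

theorem subset_mergeComps (K L M : Set V) : M ⊆ mergeComps K L M := by
  unfold mergeComps
  split_ifs with h
  · rcases h with rfl | rfl
    exacts [Set.subset_union_left, Set.subset_union_right]
  · exact subset_rfl

theorem IsSetJoinCover.image_map_mergeComps {G : LGraph V} {𝒞 : Set (Sym2 (Set V))}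
    (h𝒞 : G.IsSetJoinCover 𝒞) {K L : Set V} (htwin : ∀ M, s(K, M) ∈ 𝒞 ↔ s(L, M) ∈ 𝒞) :
    G.IsSetJoinCover (Sym2.map (mergeComps K L) '' 𝒞) := by
  refine h𝒞.image_map _ (subset_mergeComps K L) fun A B hAB u hu => ?_
  unfold mergeComps at hu
  split_ifs at hu with hA
  · have hK : s(K, B) ∈ 𝒞 := by
      rcases hA with rfl | rfl
      exacts [hAB, (htwin B).2 hAB]
    rcases hu with hu | hu
    exacts [⟨K, hu, hK⟩, ⟨L, hu, (htwin B).1 hK⟩]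
  · exact ⟨A, hu, hAB⟩

theorem coverOrder_image_map_mergeComps_lt {𝒞 : Set (Sym2 (Set V))} (hfin : (comps 𝒞).Finite)
    {K L : Set V} (hK : K ∈ comps 𝒞) (hL : L ∈ comps 𝒞) (hKL : K ≠ L) :
    coverOrder (Sym2.map (mergeComps K L) '' 𝒞) < coverOrder 𝒞 := by
  have hmerge : mergeComps K L K = mergeComps K L L := by simp [mergeComps]
  rw [coverOrder, coverOrder, comps_image_map]
  exact (Set.ncard_image_le hfin).lt_of_ne
    fun h => hKL (Set.injOn_of_ncard_image_eq h hfin hK hL hmerge)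

/-- If `𝒞` is an optimal set-join cover of a graph `G`, then the cover
graph `G(𝒞)` is twin-free: no two distinct vertices of `G(𝒞)` have the same
neighbourhood in `G(𝒞)`. -/
theorem coverGraph_twinFree_of_optimal {V : Type*} [Fintype V] (G : LGraph V)
    (𝒞 : Set (Sym2 (Set V))) (hopt : G.IsOptimalCover 𝒞) :
    TwinFree (coverGraph 𝒞) := by
  intro K L hN
  by_contra hKL
  obtain ⟨h𝒞, hord⟩ := hopt
  have hcover := h𝒞.image_map_mergeComps (mem_iff_of_neighborSet_coverGraph_eq hN)
  have hlt := coverOrder_image_map_mergeComps_lt (Set.toFinite _) K.2 L.2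
    (Subtype.coe_injective.ne hKL)
  have hle := st_le_coverOrder hcover
  omega

end LGraph
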